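/- The integer sequence (d₁, ..., dₙ) with d₁ ≥ ... ≥ dₙ appearing in the Dedekind–Weber diagonalization of a matrix A ∈ GL(n, L[x,x⁻¹]) is uniquely determined by A: if B·A·C = diag(x^{d₁},...,x^{dₙ}) and B'·A·C' = diag(x^{e₁},...,x^{eₙ}) with both sequences weakly decreasing, B,B' ∈ GL(n,L[x]) and C,C' ∈ GL(n,L[x⁻¹]), then dᵢ = eᵢ for all i. -/

import Mathlib

/-!
From `B A C = diag(x^d)` and `B' A C' = diag(x^e)`, the matrices `P = B' B⁻¹ ∈ GL(n, L[x])` and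
`Q = C'⁻¹ C ∈ GL(n, L[x⁻¹])` satisfy `P diag(x^d) = diag(x^e) Q`, i.e.
`p_ij(x) x^(d_j) = x^(e_i) q_ij(x⁻¹)`, which forces `p_ij = 0` whenever `e_i < d_j`.
If `d_k > e_k`, monotonicity makes `P` vanish on the rows `≥ k` and columns `≤ k`, so `det P = 0`,
a contradiction. Hence `d ≤ e`, and `d = e` by symmetry.
-/

open LaurentPolynomial Polynomial

namespace Polynomial

variable {R : Type*}

section Semiring

variable [Semiring R]

@[simp]
lemma coeff_toLaurent_natCast (p : R[X]) (m : ℕ) : (toLaurent p).coeff m = p.coeff m :=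
  Finsupp.mapDomain_apply Nat.cast_injective _ m

lemma coeff_toLaurent_of_neg (p : R[X]) {k : ℤ} (hk : k < 0) : (toLaurent p).coeff k = 0 :=
  Finsupp.mapDomain_of_notMem_range _ _ <| by
    rintro ⟨m, rfl⟩
    exact (Int.natCast_nonneg m).not_gt hk

end Semiring

variable [CommSemiring R]

/-- The substitution `X ↦ T⁻¹`; it models `R[x⁻¹]` as the polynomials in `X`. -/
noncomputable def toLaurentInv : R[X] →+* R[T;T⁻¹] :=
  (invert : R[T;T⁻¹] ≃ₐ[R] R[T;T⁻¹]).toRingHom.comp toLaurent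

lemma toLaurentInv_apply (p : R[X]) : toLaurentInv p = invert (toLaurent p) :=
  rfl

lemma eval₂_C_T_neg_one :
    eval₂ (LaurentPolynomial.C : R →+* R[T;T⁻¹]) (T (-1)) = ⇑toLaurentInv := by
  have : eval₂RingHom (LaurentPolynomial.C : R →+* R[T;T⁻¹]) (T (-1)) = toLaurentInv :=
    ringHom_ext (fun r => by simp [toLaurentInv_apply]) (by simp [toLaurentInv_apply])
  exact congrArg DFunLike.coe this

/-- The left side lives in degrees `≥ a`, the right side in degrees `≤ b`. -/
lemma eq_zero_of_toLaurent_mul_T_eq_T_mul_toLaurentInv {p q : R[X]} {a b : ℤ} (hba : b < a)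
    (h : toLaurent p * T a = T b * toLaurentInv q) : p = 0 := by
  ext m
  have hm := congrArg (fun f : R[T;T⁻¹] => f.coeff (m + a)) h
  simp only [T, AddMonoidAlgebra.coeff_mul_single_add, AddMonoidAlgebra.coeff_single_mul_apply,
    toLaurentInv_apply, invert_apply, coeff_toLaurent_natCast, mul_one, one_mul] at hm
  rw [hm, coeff_toLaurent_of_neg _ (by omega), coeff_zero]

end Polynomial

namespace Matrix

/-- Every permutation `σ` meets the zero block, since `σ` cannot map `t` into the complement of
`s`. -/
lemma det_eq_zero_of_zero_block {ι R : Type*} [Fintype ι] [DecidableEq ι] [CommRing R]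
    (M : Matrix ι ι R) (s t : Finset ι) (hcard : Fintype.card ι < s.card + t.card)
    (h : ∀ i ∈ s, ∀ j ∈ t, M i j = 0) : M.det = 0 := by
  rw [det_apply]
  refine Finset.sum_eq_zero fun σ _ => ?_
  obtain ⟨j, hj, hσj⟩ : ∃ j ∈ t, σ j ∈ s := by
    by_contra! hout
    have := Finset.card_le_card_of_injOn σ (fun j hj => Finset.mem_compl.mpr (hout j hj))
      σ.injective.injOn
    rw [Finset.card_compl] at this
    have := Finset.card_le_univ s
    omega
  exact smul_eq_zero_of_right _ (Finset.prod_eq_zero (Finset.mem_univ j) (h _ hσj _ hj))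

variable {R : Type*} [CommRing R]

lemma apply_eq_zero_of_map_mul_diagonal_eq {ι : Type*} [Fintype ι] [DecidableEq ι]
    {P Q : Matrix ι ι R[X]} {d e : ι → ℤ}
    (h : P.map toLaurent * diagonal (fun i => T (d i)) =
      diagonal (fun i => T (e i)) * Q.map toLaurentInv)
    {i j : ι} (hij : e i < d j) : P i j = 0 := by
  have hentry := congrFun (congrFun h i) j
  rw [mul_diagonal, diagonal_mul, map_apply, map_apply] at hentry
  exact eq_zero_of_toLaurent_mul_T_eq_T_mul_toLaurentInv hij hentry

lemma le_of_map_mul_diagonal_eq [Nontrivial R] {n : ℕ} {P Q : Matrix (Fin n) (Fin n) R[X]}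
    {d e : Fin n → ℤ} (hP : IsUnit P.det) (hd : Antitone d) (he : Antitone e)
    (h : P.map toLaurent * diagonal (fun i => T (d i)) =
      diagonal (fun i => T (e i)) * Q.map toLaurentInv) : d ≤ e := by
  intro k
  by_contra! hlt
  have hzero : P.det = 0 := by
    refine det_eq_zero_of_zero_block P (Finset.Ici k) (Finset.Iic k) ?_ fun i hi j hj => ?_
    · simp only [Fintype.card_fin, Fin.card_Ici, Fin.card_Iic]
      omega
    · rw [Finset.mem_Ici] at hi
      rw [Finset.mem_Iic] at hj
      exact apply_eq_zero_of_map_mul_diagonal_eq h ((he hi).trans_lt (hlt.trans_le (hd hj)))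
  exact not_isUnit_zero (hzero ▸ hP)

lemma le_of_diagonalizations [Nontrivial R] {n : ℕ} {A : Matrix (Fin n) (Fin n) R[T;T⁻¹]}
    {B B' C C' : Matrix (Fin n) (Fin n) R[X]} {d e : Fin n → ℤ}
    (hB : IsUnit B.det) (hB' : IsUnit B'.det) (hC' : IsUnit C'.det)
    (hd : Antitone d) (he : Antitone e)
    (h1 : B.map toLaurent * A * C.map toLaurentInv = diagonal (fun i => T (d i)))
    (h2 : B'.map toLaurent * A * C'.map toLaurentInv = diagonal (fun i => T (e i))) :
    d ≤ e := by
  have hP : IsUnit (B' * B⁻¹).det := by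
    rw [det_mul, det_nonsing_inv]
    exact hB'.mul hB.ringInverse
  refine le_of_map_mul_diagonal_eq hP hd he (Q := C'⁻¹ * C) ?_
  calc (B' * B⁻¹).map toLaurent * diagonal (fun i => T (d i))
      = (B' * B⁻¹ * B).map toLaurent * A * C.map toLaurentInv := by
        rw [← h1]
        simp only [Matrix.map_mul, Matrix.mul_assoc]
    _ = B'.map toLaurent * A * (C' * (C'⁻¹ * C)).map toLaurentInv := by
        rw [nonsing_inv_mul_cancel_right _ _ hB, mul_nonsing_inv_cancel_left _ _ hC']
    _ = diagonal (fun i => T (e i)) * (C'⁻¹ * C).map toLaurentInv := by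
        rw [← h2]
        simp only [Matrix.map_mul, Matrix.mul_assoc]

end Matrix

open Matrix LaurentPolynomial

theorem dedekind_weber_unique_general (L : Type*) [Field L] (n : ℕ)
    (A : Matrix (Fin n) (Fin n) (LaurentPolynomial L))
    (B B' C C' : Matrix (Fin n) (Fin n) (Polynomial L)) (d e : Fin n → ℤ)
    (hB : IsUnit B.det) (hB' : IsUnit B'.det) (hC : IsUnit C.det) (hC' : IsUnit C'.det)
    (hd : Antitone d) (he : Antitone e)
    (h1 : B.map (Polynomial.toLaurent : Polynomial L → LaurentPolynomial L) * A *
        C.map (fun p => Polynomial.eval₂ (LaurentPolynomial.C : L →+* LaurentPolynomial L)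
          (T (-1)) p) = Matrix.diagonal (fun i => T (d i)))
    (h2 : B'.map (Polynomial.toLaurent : Polynomial L → LaurentPolynomial L) * A *
        C'.map (fun p => Polynomial.eval₂ (LaurentPolynomial.C : L →+* LaurentPolynomial L)
          (T (-1)) p) = Matrix.diagonal (fun i => T (e i))) :
    d = e := by
  rw [eval₂_C_T_neg_one] at h1 h2
  exact le_antisymm (le_of_diagonalizations hB hB' hC' hd he h1 h2)
    (le_of_diagonalizations hB' hB hC he hd h2 h1)

/-- Uniqueness of the exponent sequence in the Dedekind–Weber diagonalization. -/
theorem dedekind_weber_unique (L : Type*) [Field L] (n : ℕ)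
    (A : Matrix (Fin n) (Fin n) (LaurentPolynomial L)) (hA : IsUnit A.det)
    (B B' C C' : Matrix (Fin n) (Fin n) (Polynomial L)) (d e : Fin n → ℤ)
    (hB : IsUnit B.det) (hB' : IsUnit B'.det) (hC : IsUnit C.det) (hC' : IsUnit C'.det)
    (hd : Antitone d) (he : Antitone e)
    (h1 : B.map (Polynomial.toLaurent : Polynomial L → LaurentPolynomial L) * A *
        C.map (fun p => Polynomial.eval₂ (LaurentPolynomial.C : L →+* LaurentPolynomial L)
          (T (-1)) p) = Matrix.diagonal (fun i => T (d i)))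
    (h2 : B'.map (Polynomial.toLaurent : Polynomial L → LaurentPolynomial L) * A *
        C'.map (fun p => Polynomial.eval₂ (LaurentPolynomial.C : L →+* LaurentPolynomial L)
          (T (-1)) p) = Matrix.diagonal (fun i => T (e i))) :
    d = e :=
  dedekind_weber_unique_general L n A B B' C C' d e hB hB' hC hC' hd he h1 h2
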